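/- arXiv:2311.17452 — 7 statements merged into one kernel-verified Lean document; each statement's English description precedes it below -/
import Mathlib

section
/- Let $R$ be an infinite integral domain and $n \geq 2$. Let $M \in \mathrm{GL}_n(R)$ be an invertible matrix such that the map $F : R^n \to R^n$, $x \mapsto Mx$, satisfies the symmetric condition: for every $x \in R^n$ and every permutation $\tau \in \mathfrak{S}_n$, there exists $\tau' \in \mathfrak{S}_n$ with $F(\tau \cdot x) = \tau' \cdot F(x)$. Then there exist a permutation matrix $P$ and elements $f, g \in R$ such that $M = P \cdot (f I_n + g(J_n - I_n))$, i.e., $M$ is a permutation matrix times the matrix with diagonal entries all equal to $f$ and off-diagonal entries all equal to $g$. -/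
/-- The `n × n` matrix over `R` with all diagonal entries equal to `f` and all
off-diagonal entries equal to `g`, i.e. `f • I + g • (J - I)`. -/
def diagOffMatrix (R : Type*) [CommRing R] (n : ℕ) (f g : R) : Matrix (Fin n) (Fin n) R :=
  Matrix.of fun i j => if i = j then f else g

/-- A map `F : Mⁿ → Mⁿ` satisfies the symmetric condition if for every point `x` and every
permutation `τ` of the coordinates there is a permutation `τ'` with `F (x ∘ τ) = (F x) ∘ τ'`;
equivalently, `F` descends to the quotient `Mⁿ / 𝔖ₙ`. -/
def SymmCond {M : Type*} {n : ℕ} (F : (Fin n → M) → (Fin n → M)) : Prop :=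
  ∀ (x : Fin n → M) (τ : Equiv.Perm (Fin n)), ∃ τ' : Equiv.Perm (Fin n),
    F (x ∘ τ) = (F x) ∘ τ'

private lemma symm_step1 {R : Type*} [CommRing R] [IsDomain R] [Infinite R]
    {n : ℕ} (M : Matrix (Fin n) (Fin n) R)
    (hsym : SymmCond fun x => M.mulVec x) (τ : Equiv.Perm (Fin n)) :
    ∃ π : Equiv.Perm (Fin n), ∀ i j, M (π i) (τ j) = M i j := by
  classical
  -- A π i j = M (π i) j - M i (τ⁻¹ j)
  set A : Equiv.Perm (Fin n) → Matrix (Fin n) (Fin n) R :=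
    fun π => Matrix.of fun i j => M (π i) j - M i (τ⁻¹ j) with hA
  have hvan : ∀ x : Fin n → R, ∃ π, ∀ i, ∑ j, A π i j * x j = 0 := by
    intro x
    obtain ⟨π, hπ⟩ := hsym x τ
    refine ⟨π, fun i => ?_⟩
    have h1 : (M.mulVec (x ∘ τ)) i = ∑ j, M i (τ⁻¹ j) * x j := by
      rw [← Equiv.sum_comp τ (fun j => M i (τ⁻¹ j) * x j)]
      simp [Matrix.mulVec, dotProduct, Function.comp]
    have h2 : ((M.mulVec x) ∘ π) i = ∑ j, M (π i) j * x j := by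
      simp [Matrix.mulVec, dotProduct]
    simp only [hA, Matrix.of_apply, sub_mul, Finset.sum_sub_distrib]
    rw [← h1, ← h2, sub_eq_zero]
    exact (congrFun hπ i).symm
  have hzero : ∃ π, A π = 0 := by
    by_contra h
    push_neg at h
    have hij : ∀ π : Equiv.Perm (Fin n), ∃ i j, A π i j ≠ 0 := by
      intro π
      by_contra hc
      push_neg at hc
      exact h π (Matrix.ext fun i j => hc i j)
    choose I J hIJ using hij
    set p : MvPolynomial (Fin n) R :=
      ∏ π : Equiv.Perm (Fin n), ∑ j, MvPolynomial.C (A π (I π) j) * MvPolynomial.X j with hp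
    have hpne : p ≠ 0 := by
      rw [hp]
      apply Finset.prod_ne_zero_iff.mpr
      intro π _
      intro hq
      have := congrArg (MvPolynomial.coeff (Finsupp.single (J π) 1)) hq
      simp only [MvPolynomial.coeff_sum, MvPolynomial.coeff_C_mul, MvPolynomial.coeff_zero] at this
      rw [Finset.sum_eq_single (J π)] at this
      · simp [MvPolynomial.coeff_X] at this
        exact hIJ π this
      · intro b _ hb
        rw [MvPolynomial.coeff_X', if_neg (by simpa [Finsupp.single_left_inj] using hb), mul_zero]
      · simp
    have hpz : p = 0 := by
      apply MvPolynomial.funext (q := 0)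
      intro x
      obtain ⟨π, hπ⟩ := hvan x
      rw [map_zero, hp, map_prod]
      refine Finset.prod_eq_zero (Finset.mem_univ π) ?_
      rw [map_sum]
      simpa using hπ (I π)
    exact hpne hpz
  obtain ⟨π, hπ⟩ := hzero
  refine ⟨π, fun i j => ?_⟩
  have := congrFun (congrFun hπ i) (τ j)
  simp only [hA, Matrix.of_apply, Matrix.zero_apply, sub_eq_zero] at this
  simpa using this

private lemma key_pairs {R : Type*} [CommRing R] [IsDomain R]
    {n : ℕ} (M : Matrix (Fin n) (Fin n) R) (hdet0 : M.det ≠ 0)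
    (hvinj : ∀ v : Fin n → R, M.vecMul v = 0 → v = 0)
    (hrel : ∀ τ : Equiv.Perm (Fin n), ∃ π : Equiv.Perm (Fin n), ∀ i j, M (π i) (τ j) = M i j)
    (a b : Fin n) (hab : a ≠ b) :
    ∃ r r' : Fin n, r ≠ r' ∧ (∀ j, M r' j = M r (Equiv.swap a b j)) ∧
      (M r a ≠ M r b) ∧ (M r' a ≠ M r' b) ∧
      (∀ k, M k a ≠ M k b → k = r ∨ k = r') := by
  classical
  have hrows : ∀ {i j : Fin n}, M i = M j → i = j := by
    intro i j hij
    by_contra hne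
    exact hdet0 (Matrix.det_zero_of_row_eq hne hij)
  obtain ⟨π, hπ⟩ := hrel (Equiv.swap a b)
  have hrow : ∀ i j, M (π i) j = M i (Equiv.swap a b j) := by
    intro i j
    have := hπ i (Equiv.swap a b j)
    rwa [Equiv.swap_apply_self] at this
  have hinv : ∀ i, π (π i) = i := by
    intro i
    apply hrows
    funext j
    rw [hrow, hrow, Equiv.swap_apply_self]
  have hfix : ∀ i, M i a = M i b → π i = i := by
    intro i h
    apply hrows
    funext j
    rw [hrow]
    rcases eq_or_ne j a with rfl | hja
    · rw [Equiv.swap_apply_left]; exact h.symm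
    rcases eq_or_ne j b with rfl | hjb
    · rw [Equiv.swap_apply_right]; exact h
    · rw [Equiv.swap_apply_of_ne_of_ne hja hjb]
  have hmove : ∀ i, M i a ≠ M i b → π i ≠ i := by
    intro i h hc
    apply h
    have := hrow i a
    rw [hc, Equiv.swap_apply_left] at this
    exact this
  obtain ⟨r, hr⟩ : ∃ r, M r a ≠ M r b := by
    by_contra h
    push_neg at h
    exact hdet0 (Matrix.det_zero_of_column_eq hab h)
  have hπrD : M (π r) a ≠ M (π r) b := by
    rw [hrow, hrow, Equiv.swap_apply_left, Equiv.swap_apply_right]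
    exact hr.symm
  refine ⟨r, π r, fun hc => hmove r hr hc.symm, fun j => hrow r j, hr, hπrD, ?_⟩
  intro k hk
  by_contra hor
  push_neg at hor
  obtain ⟨hkr, hkπr⟩ := hor
  have hπr : π r ≠ r := hmove r hr
  have hπk : π k ≠ k := hmove k hk
  set c : R := M r a - M r b with hc
  set d : R := M k a - M k b with hd
  set v : Fin n → R := fun s =>
    d * ((if s = r then 1 else 0) - (if s = π r then 1 else 0)) -
    c * ((if s = k then 1 else 0) - (if s = π k then 1 else 0)) with hv
  have hrπk : r ≠ π k := by
    intro h
    apply hkπr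
    rw [h] at *
    exact (hinv k).symm
  have hvM : M.vecMul v = 0 := by
    funext j
    rw [Matrix.vecMul, dotProduct]
    have expand : ∀ s, v s * M s j =
        d * ((if s = r then 1 else 0) * M s j) - d * ((if s = π r then 1 else 0) * M s j)
        - (c * ((if s = k then 1 else 0) * M s j) - c * ((if s = π k then 1 else 0) * M s j)) := by
      intro s; rw [hv]; ring
    rw [Finset.sum_congr rfl (fun s _ => expand s)]
    rw [Finset.sum_sub_distrib, Finset.sum_sub_distrib, Finset.sum_sub_distrib]
    simp only [← Finset.mul_sum]
    simp only [ite_mul, one_mul, zero_mul]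
    rw [Finset.sum_ite_eq' Finset.univ r (fun s => M s j),
        Finset.sum_ite_eq' Finset.univ (π r) (fun s => M s j),
        Finset.sum_ite_eq' Finset.univ k (fun s => M s j),
        Finset.sum_ite_eq' Finset.univ (π k) (fun s => M s j)]
    simp only [Finset.mem_univ, if_pos, Pi.zero_apply]
    rw [hrow r j, hrow k j]
    rcases eq_or_ne j a with rfl | hja
    · rw [Equiv.swap_apply_left, hc, hd]; ring
    rcases eq_or_ne j b with rfl | hjb
    · rw [Equiv.swap_apply_right, hc, hd]; ring
    · rw [Equiv.swap_apply_of_ne_of_ne hja hjb]; ring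
  have := congrFun (hvinj v hvM) r
  rw [hv] at this
  simp only [Pi.zero_apply, if_pos rfl, if_neg hπr.symm, if_neg (Ne.symm hkr), if_neg hrπk] at this
  have hd0 : d = 0 := by simpa using this
  rw [hd] at hd0
  exact hk (sub_eq_zero.mp hd0)

private lemma pair3 {α : Type*} {u v x y z : α} (hx : x = u ∨ x = v) (hy : y = u ∨ y = v)
    (hz : z = u ∨ z = v) (hxy : x ≠ y) : z = x ∨ z = y := by
  rcases hx with rfl | rfl <;> rcases hy with rfl | rfl <;> tauto

private lemma main_ge3 {R : Type*} [CommRing R] {n : ℕ} (hn3 : 3 ≤ n)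
    (M : Matrix (Fin n) (Fin n) R)
    (htwo : ∀ a b : Fin n, a ≠ b → ∃ r r' : Fin n, r ≠ r' ∧
      (∀ j, M r' j = M r (Equiv.swap a b j)) ∧ (M r a ≠ M r b) ∧ (M r' a ≠ M r' b) ∧
      (∀ k, M k a ≠ M k b → k = r ∨ k = r')) :
    ∃ (σ : Equiv.Perm (Fin n)) (f g : R),
      M = σ.permMatrix R * diagOffMatrix R n f g := by
  classical
  choose! r r' hne hswap hD hD' huniq using htwo
  have hmem : ∀ a b : Fin n, a ≠ b → ∀ k, (M k a ≠ M k b ↔ (k = r a b ∨ k = r' a b)) := by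
    intro a b hab k
    constructor
    · exact huniq a b hab k
    · rintro (rfl | rfl)
      · exact hD a b hab
      · exact hD' a b hab
  have hswap_sym : ∀ a b : Fin n, a ≠ b → ∀ x y : Fin n, x ≠ y →
      (x = r a b ∨ x = r' a b) → (y = r a b ∨ y = r' a b) →
      ∀ j, M y j = M x (Equiv.swap a b j) := by
    intro a b hab x y hxy hx hy
    rcases hx with rfl | rfl <;> rcases hy with rfl | rfl
    · exact absurd rfl hxy
    · exact hswap a b hab
    · intro j
      have := hswap a b hab (Equiv.swap a b j)
      rw [Equiv.swap_apply_self] at this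
      exact this.symm
    · exact absurd rfl hxy
  -- pairs for distinct (a,b), (a,c) are distinct
  have L_distinct : ∀ a b c : Fin n, a ≠ b → a ≠ c → b ≠ c → ∀ x y : Fin n, x ≠ y →
      (x = r a b ∨ x = r' a b) → (y = r a b ∨ y = r' a b) →
      (x = r a c ∨ x = r' a c) → (y = r a c ∨ y = r' a c) → False := by
    intro a b c hab hac hbc x y hxy pabx paby pacx pacy
    have h1 := hswap_sym a b hab x y hxy pabx paby b
    have h2 := hswap_sym a c hac x y hxy pacx pacy b
    rw [Equiv.swap_apply_right] at h1
    rw [Equiv.swap_apply_of_ne_of_ne (Ne.symm hab) hbc] at h2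
    exact ((hmem a b hab x).mpr pabx) (h1.symm.trans h2)
  -- pairs for (a,b) and (a,c) share an element
  have L_common : ∀ a b c : Fin n, a ≠ b → a ≠ c → b ≠ c →
      ∃ x, (x = r a b ∨ x = r' a b) ∧ (x = r a c ∨ x = r' a c) := by
    intro a b c hab hac hbc
    by_contra hcon
    push_neg at hcon
    have step : ∀ k : Fin n, (k = r a b ∨ k = r' a b) → (k = r b c ∨ k = r' b c) := by
      intro k pk
      have h1 : M k a = M k c := by
        by_contra hne'
        have hc2 := hcon k pk
        rcases (hmem a c hac k).mp hne' with h' | h'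
        · exact hc2.1 h'
        · exact hc2.2 h'
      have h2 : M k a ≠ M k b := (hmem a b hab k).mpr pk
      exact (hmem b c hbc k).mp (fun hbceq => h2 (h1.trans hbceq.symm))
    have prab := step (r a b) (Or.inl rfl)
    have prab' := step (r' a b) (Or.inr rfl)
    -- now consider x := r a c
    have hnab : ¬ (r a c = r a b ∨ r a c = r' a b) := fun p => (hcon (r a c) p).1 rfl
    have h1 : M (r a c) a = M (r a c) b := by
      by_contra hne'
      exact hnab ((hmem a b hab _).mp hne')
    have h2 : M (r a c) a ≠ M (r a c) c := hD a c hac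
    have h3 : M (r a c) b ≠ M (r a c) c := fun h => h2 (h1.trans h)
    have p4 : r a c = r b c ∨ r a c = r' b c := (hmem b c hbc _).mp h3
    have := pair3 prab prab' p4 (hne a b hab)
    exact hnab (by tauto)
  -- extension: common element of pairs (a,b),(a,c) is in pair (a,d)
  have L_extend : ∀ a b c d : Fin n, a ≠ b → a ≠ c → a ≠ d → b ≠ c → b ≠ d → c ≠ d →
      ∀ x, (x = r a b ∨ x = r' a b) → (x = r a c ∨ x = r' a c) →
      (x = r a d ∨ x = r' a d) := by
    intro a b c d hab hac had hbc hbd hcd x pabx pacx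
    by_contra hx
    obtain ⟨y, pby, pdy⟩ := L_common a b d hab had hbd
    have hyx : y ≠ x := fun h => hx (h ▸ pdy)
    obtain ⟨z, pcz, pdz⟩ := L_common a c d hac had hcd
    have hzx : z ≠ x := fun h => hx (h ▸ pdz)
    have hyz : y ≠ z := by
      intro h
      exact L_distinct a b c hab hac hbc x y (Ne.symm hyx) pabx pby pacx (h ▸ pcz)
    have s1 := hswap_sym a b hab x y (Ne.symm hyx) pabx pby b
    have s2 := hswap_sym a c hac x z (Ne.symm hzx) pacx pcz b
    have s3 := hswap_sym a d had y z hyz pdy pdz b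
    rw [Equiv.swap_apply_right] at s1
    rw [Equiv.swap_apply_of_ne_of_ne (Ne.symm hab) hbc] at s2
    rw [Equiv.swap_apply_of_ne_of_ne (Ne.symm hab) hbd] at s3
    -- s2 : M z b = M x b ; s3 : M z b = M y b ; s1 : M y b = M x a
    have : M x a = M x b := by rw [← s1, ← s3, s2]
    exact ((hmem a b hab x).mpr pabx) this
  have hthree : ∀ a : Fin n, ∃ b c : Fin n, b ≠ a ∧ c ≠ a ∧ b ≠ c := by
    intro a
    by_cases h0 : (a : ℕ) = 0
    · exact ⟨⟨1, by omega⟩, ⟨2, by omega⟩, by simp [Fin.ext_iff]; omega,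
        by simp [Fin.ext_iff]; omega, by simp [Fin.ext_iff]⟩
    by_cases h1 : (a : ℕ) = 1
    · exact ⟨⟨0, by omega⟩, ⟨2, by omega⟩, by simp [Fin.ext_iff]; omega,
        by simp [Fin.ext_iff]; omega, by simp [Fin.ext_iff]⟩
    · exact ⟨⟨0, by omega⟩, ⟨1, by omega⟩, by simp [Fin.ext_iff]; omega,
        by simp [Fin.ext_iff]; omega, by simp [Fin.ext_iff]⟩
  have hpick : ∀ a b : Fin n, ∃ c : Fin n, c ≠ a ∧ c ≠ b := by
    intro a b
    obtain ⟨u, v, hu, hv, huv⟩ := hthree a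
    rcases eq_or_ne u b with rfl | h
    · exact ⟨v, hv, Ne.symm huv⟩
    · exact ⟨u, hu, h⟩
  choose B C hBa hCa hBC using hthree
  have hcommon := fun a => L_common a (B a) (C a) (Ne.symm (hBa a)) (Ne.symm (hCa a)) (hBC a)
  choose ω hω1 hω2 using hcommon
  have hωall : ∀ a e : Fin n, e ≠ a → (ω a = r a e ∨ ω a = r' a e) := by
    intro a e hea
    rcases eq_or_ne e (B a) with rfl | h1
    · exact hω1 a
    rcases eq_or_ne e (C a) with rfl | h2
    · exact hω2 a
    · exact L_extend a (B a) (C a) e (Ne.symm (hBa a)) (Ne.symm (hCa a)) (Ne.symm hea)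
        (hBC a) (Ne.symm h1) (Ne.symm h2) (ω a) (hω1 a) (hω2 a)
  have hωD : ∀ a e : Fin n, e ≠ a → M (ω a) a ≠ M (ω a) e := by
    intro a e hea
    exact (hmem a e (Ne.symm hea) (ω a)).mpr (hωall a e hea)
  have exists_partner : ∀ a b : Fin n, a ≠ b → ∀ x, (x = r a b ∨ x = r' a b) →
      ∃ y, (y = r a b ∨ y = r' a b) ∧ y ≠ x ∧ ∀ j, M y j = M x (Equiv.swap a b j) := by
    intro a b hab x px
    rcases px with rfl | rfl
    · exact ⟨r' a b, Or.inr rfl, Ne.symm (hne a b hab),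
        hswap_sym a b hab _ _ (hne a b hab) (Or.inl rfl) (Or.inr rfl)⟩
    · exact ⟨r a b, Or.inl rfl, hne a b hab,
        hswap_sym a b hab _ _ (Ne.symm (hne a b hab)) (Or.inr rfl) (Or.inl rfl)⟩
  have hωinj : Function.Injective ω := by
    intro a b h
    by_contra hab
    obtain ⟨c, hca, hcb⟩ := hpick a b
    have Dab : M (ω a) a ≠ M (ω a) b := hωD a b (Ne.symm hab)
    have Dac : M (ω a) a ≠ M (ω a) c := hωD a c hca
    have Dbc : M (ω a) b ≠ M (ω a) c := by
      have := hωD b c hcb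
      rwa [← h] at this
    obtain ⟨u, pu, hux, hurel⟩ := exists_partner a b hab (ω a) (hωall a b (Ne.symm hab))
    obtain ⟨w, pw, hwx, hwrel⟩ := exists_partner a c (Ne.symm hca) (ω a) (hωall a c hca)
    have pu' : u = r a c ∨ u = r' a c := by
      apply (hmem a c (Ne.symm hca) u).mp
      have e1 := hurel a
      have e2 := hurel c
      rw [Equiv.swap_apply_left] at e1
      rw [Equiv.swap_apply_of_ne_of_ne hca hcb] at e2
      rw [e1, e2]
      exact Dbc
    have huw : w = u ∨ w = ω a := pair3 pu' (hωall a c hca) pw hux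
    have huw' : w = u := by
      rcases huw with h' | h'
      · exact h'
      · exact absurd h' hwx
    have e1 := hurel b
    have e2 := hwrel b
    rw [Equiv.swap_apply_right] at e1
    rw [Equiv.swap_apply_of_ne_of_ne (Ne.symm hab) (Ne.symm hcb)] at e2
    rw [huw'] at e2
    exact Dab (by rw [e1] at e2; exact e2)
  have hoff : ∀ a e e' : Fin n, e ≠ a → e' ≠ a → M (ω a) e = M (ω a) e' := by
    intro a e e' hea he'a
    rcases eq_or_ne e e' with rfl | hee
    · rfl
    by_contra hne'
    have p1 : ω a = r e e' ∨ ω a = r' e e' := (hmem e e' hee (ω a)).mp hne'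
    have p2 : ω e = r e e' ∨ ω e = r' e e' := hωall e e' (Ne.symm hee)
    have p3 : ω e' = r e e' ∨ ω e' = r' e e' := by
      apply (hmem e e' hee (ω e')).mp
      exact Ne.symm (hωD e' e hee)
    have hae : a ≠ e := Ne.symm hea
    have hae' : a ≠ e' := Ne.symm he'a
    have := pair3 p2 p3 p1 (fun hc => hee (hωinj hc))
    rcases this with h' | h'
    · exact hae (hωinj h')
    · exact hae' (hωinj h')
  have hglob : ∀ a b : Fin n, a ≠ b → ∀ j, M (ω b) j = M (ω a) (Equiv.swap a b j) := by
    intro a b hab j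
    apply hswap_sym a b hab (ω a) (ω b) (fun hc => hab (hωinj hc))
      (hωall a b (Ne.symm hab))
    apply (hmem a b hab (ω b)).mp
    exact Ne.symm (hωD b a hab)
  set a0 : Fin n := ⟨0, by omega⟩ with ha0
  set f : R := M (ω a0) a0 with hfdef
  set g : R := M (ω a0) (B a0) with hgdef
  have hf : ∀ a : Fin n, M (ω a) a = f := by
    intro a
    rcases eq_or_ne a a0 with rfl | h
    · rfl
    · have := hglob a0 a (Ne.symm h) a
      rwa [Equiv.swap_apply_right] at this
  have hg : ∀ a e : Fin n, e ≠ a → M (ω a) e = g := by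
    intro a e hea
    rcases eq_or_ne a a0 with rfl | h
    · exact hoff a0 e (B a0) hea (hBa a0)
    · obtain ⟨c, hca, hca0⟩ := hpick a a0
      have h1 : M (ω a) c = M (ω a0) c := by
        have := hglob a0 a (Ne.symm h) c
        rwa [Equiv.swap_apply_of_ne_of_ne hca0 hca] at this
      have h2 : M (ω a0) c = g := hoff a0 c (B a0) hca0 (hBa a0)
      calc M (ω a) e = M (ω a) c := hoff a e c hea hca
        _ = M (ω a0) c := h1
        _ = g := h2
  set σ0 : Equiv.Perm (Fin n) := Equiv.ofBijective ω (Finite.injective_iff_bijective.mp hωinj)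
    with hσ0
  have hσ0app : ∀ a, σ0 a = ω a := fun a => rfl
  refine ⟨σ0.symm, f, g, ?_⟩
  apply Matrix.ext
  intro i j
  rw [Equiv.Perm.permMatrix, PEquiv.toMatrix_toPEquiv_mul, Matrix.submatrix_apply, id]
  show M i j = diagOffMatrix R n f g (σ0.symm i) j
  rw [diagOffMatrix]
  simp only [Matrix.of_apply]
  have hi : ω (σ0.symm i) = i := by
    rw [← hσ0app]
    exact σ0.apply_symm_apply i
  split_ifs with hcase
  · subst hcase
    have := hf (σ0.symm i)
    rwa [hi] at this
  · have := hg (σ0.symm i) j (fun hj => hcase hj.symm)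
    rwa [hi] at this
private lemma main_two {R : Type*} [CommRing R] [IsDomain R] (M : Matrix (Fin 2) (Fin 2) R)
    (hdet0 : M.det ≠ 0)
    (hrel : ∃ π : Equiv.Perm (Fin 2), ∀ i j, M (π i) (Equiv.swap 0 1 j) = M i j) :
    ∃ (σ : Equiv.Perm (Fin 2)) (f g : R),
      M = σ.permMatrix R * diagOffMatrix R 2 f g := by
  obtain ⟨π, hπ⟩ := hrel
  have hcases : π 0 = 0 ∨ π 0 = 1 := by
    have := (π 0).isLt
    rcases eq_or_ne (π 0) 0 with h | h
    · exact Or.inl h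
    · right
      simp only [Fin.ext_iff] at h ⊢
      omega
  rcases hcases with h | h
  · have h1 : π 1 = 1 := by
      have hne : π 1 ≠ π 0 := fun hc => by simpa using π.injective hc
      rw [h] at hne
      have := (π 1).isLt
      simp only [Fin.ext_iff] at hne ⊢
      omega
    have c0 : M 0 0 = M 0 1 := by
      have := hπ 0 1
      rwa [h, Equiv.swap_apply_right] at this
    have c1 : M 1 0 = M 1 1 := by
      have := hπ 1 1
      rwa [h1, Equiv.swap_apply_right] at this
    have : ∀ k, M k 0 = M k 1 := by
      intro k
      fin_cases k
      · exact c0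
      · exact c1
    exact absurd (Matrix.det_zero_of_column_eq (by decide) this) hdet0
  · have h1 : π 1 = 0 := by
      have hne : π 1 ≠ π 0 := fun hc => by simpa using π.injective hc
      rw [h] at hne
      have := (π 1).isLt
      simp only [Fin.ext_iff] at hne ⊢
      omega
    have e11 : M 1 1 = M 0 0 := by
      have := hπ 0 0
      rwa [h, Equiv.swap_apply_left] at this
    have e10 : M 1 0 = M 0 1 := by
      have := hπ 0 1
      rwa [h, Equiv.swap_apply_right] at this
    refine ⟨1, M 0 0, M 0 1, ?_⟩
    apply Matrix.ext
    intro i j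
    rw [Equiv.Perm.permMatrix, PEquiv.toMatrix_toPEquiv_mul, Matrix.submatrix_apply, id]
    show M i j = diagOffMatrix R 2 (M 0 0) (M 0 1) ((1 : Equiv.Perm (Fin 2)) i) j
    rw [diagOffMatrix]
    simp only [Matrix.of_apply, Equiv.Perm.one_apply]
    fin_cases i <;> fin_cases j <;> simp_all

/-- Over an infinite integral domain, an invertible matrix whose associated linear map on `Rⁿ`
satisfies the symmetric condition is a permutation matrix times a matrix with diagonal entries
all equal to some `f` and off-diagonal entries all equal to some `g`. -/
theorem symmCond_invertible_classification (R : Type*) [CommRing R] [IsDomain R] [Infinite R]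
    (n : ℕ) (hn : 2 ≤ n) (M : Matrix (Fin n) (Fin n) R) (hM : IsUnit M)
    (hsym : SymmCond fun x => M.mulVec x) :
    ∃ (σ : Equiv.Perm (Fin n)) (f g : R),
      M = σ.permMatrix R * diagOffMatrix R n f g := by
  classical
  have hdet : IsUnit M.det := (Matrix.isUnit_iff_isUnit_det M).mp hM
  have hdet0 : M.det ≠ 0 := hdet.ne_zero
  have hvinj : ∀ v : Fin n → R, M.vecMul v = 0 → v = 0 := by
    intro v hv
    have h1 : Matrix.vecMul v (M * M⁻¹) = 0 := by
      rw [← Matrix.vecMul_vecMul, hv, Matrix.zero_vecMul]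
    rwa [Matrix.mul_nonsing_inv M hdet, Matrix.vecMul_one] at h1
  have hrel := fun τ => symm_step1 M hsym τ
  by_cases hn3 : 3 ≤ n
  · exact main_ge3 hn3 M (fun a b hab => key_pairs M hdet0 hvinj hrel a b hab)
  · have hn2 : n = 2 := by omega
    subst hn2
    exact main_two M hdet0 (hrel (Equiv.swap 0 1))
end

section
/- Let $R$ be an infinite integral domain, $n \geq 2$, and $M = (f_{ij}) \in \mathrm{GL}_n(R)$ an invertible matrix such that the map $F : R^n \to R^n$, $x \mapsto Mx$, satisfies the symmetric condition (for every $x \in R^n$ and $\tau \in \mathfrak{S}_n$ there exists $\tau'$ with $F(\tau \cdot x) = \tau' \cdot F(x)$). Then for every $2 \leq i \leq n$, the tuple of entries of the $i$-th column $(f_{1i}, \ldots, f_{ni})$ is a permutation of the tuple of entries of the first column $(f_{11}, \ldots, f_{n1})$. -/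
/-- Over an infinite integral domain, if an invertible matrix `M = (f i j)` induces a map of
`Rⁿ` satisfying the symmetric condition, then every column of `M` is a permutation of the
first column. -/
theorem columns_perm_of_symmCond (R : Type*) [CommRing R] [IsDomain R] [Infinite R]
    (n : ℕ) (hn : 2 ≤ n) (M : Matrix (Fin n) (Fin n) R) (hM : IsUnit M)
    (hsym : SymmCond fun x => M.mulVec x) :
    ∀ i : Fin n, i ≠ ⟨0, by omega⟩ → ∃ σ : Equiv.Perm (Fin n),
      ∀ k : Fin n, M k i = M (σ k) ⟨0, by omega⟩ := by
  intro i hi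
  set z : Fin n := ⟨0, by omega⟩ with hz0
  -- key uniform statement
  have key : ∀ τ : Equiv.Perm (Fin n), ∃ τ' : Equiv.Perm (Fin n),
      ∀ k j, M k (τ.symm j) = M (τ' k) j := by
    intro τ
    by_contra hcon
    push_neg at hcon
    choose k j hkj using hcon
    set p : Equiv.Perm (Fin n) → MvPolynomial (Fin n) R :=
      fun τ' => ∑ l, MvPolynomial.C (M (k τ') (τ.symm l) - M (τ' (k τ')) l) * MvPolynomial.X l
      with hp
    have hpne : ∀ τ', p τ' ≠ 0 := by
      intro τ' h0
      apply hkj τ'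
      have hc := congrArg (MvPolynomial.coeff (Finsupp.single (j τ') 1)) h0
      have hcoeff : MvPolynomial.coeff (Finsupp.single (j τ') 1) (p τ')
          = M (k τ') (τ.symm (j τ')) - M (τ' (k τ')) (j τ') := by
        rw [hp]
        simp only [MvPolynomial.coeff_sum, MvPolynomial.coeff_C_mul, MvPolynomial.coeff_X']
        rw [Finset.sum_eq_single (j τ')]
        · simp
        · intro b _ hb
          rw [if_neg, mul_zero]
          intro h
          exact hb (by
            have := congrArg (fun f : Fin n →₀ ℕ => f b) h
            simpa using (Finsupp.single_left_injective (by norm_num) h).symm ▸ rfl)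
        · intro h; exact absurd (Finset.mem_univ _) h
      rw [h0] at hcoeff
      simp at hcoeff
      exact sub_eq_zero.mp hcoeff.symm
    have hprod : (∏ τ' : Equiv.Perm (Fin n), p τ') ≠ 0 :=
      Finset.prod_ne_zero_iff.mpr (fun τ' _ => hpne τ')
    have hex : ∃ x : Fin n → R, MvPolynomial.eval x (∏ τ' : Equiv.Perm (Fin n), p τ') ≠ 0 := by
      by_contra hx
      push_neg at hx
      exact hprod (MvPolynomial.funext (fun x => by simpa using hx x))
    obtain ⟨x, hx⟩ := hex
    obtain ⟨τ', hτ'⟩ := hsym x τ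
    have heval : MvPolynomial.eval x (p τ') = 0 := by
      rw [hp]
      simp only [map_sum, map_mul, MvPolynomial.eval_C, MvPolynomial.eval_X]
      have h1 := congrFun hτ' (k τ')
      simp only [Function.comp_apply, Matrix.mulVec, dotProduct] at h1
      have h2 : ∑ l, M (k τ') (τ.symm l) * x l = ∑ l, M (k τ') l * x (τ l) := by
        rw [← Equiv.sum_comp τ (fun l => M (k τ') (τ.symm l) * x l)]
        simp
      calc ∑ l, (M (k τ') (τ.symm l) - M (τ' (k τ')) l) * x l
          = (∑ l, M (k τ') (τ.symm l) * x l) - ∑ l, M (τ' (k τ')) l * x l := by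
            rw [← Finset.sum_sub_distrib]; congr 1; ext l; ring
        _ = 0 := by
            rw [h2]
            rw [sub_eq_zero]
            simpa [Matrix.mulVec, dotProduct, Function.comp] using h1
    apply hx
    rw [map_prod]
    exact Finset.prod_eq_zero (Finset.mem_univ τ') heval
  obtain ⟨σ, hσ⟩ := key (Equiv.swap z i)
  refine ⟨σ, fun kk => ?_⟩
  have := hσ kk z
  simpa using this
end

section
/- Let $R$ be an infinite integral domain, $n \geq 3$, and $M = (f_{ij}) \in \mathrm{GL}_n(R)$ an invertible matrix such that the map $F : R^n \to R^n$, $x \mapsto Mx$, maps the set $\Delta' := \{(x_1, \ldots, x_n) \in R^n \mid \exists i,\ x_1 = \cdots = x_{i-1} = x_{i+1} = \cdots = x_n\}$ into itself. Then there exists an index $1 \leq k \leq n$ such that $f_{i1} = f_{j1}$ for all $i, j \neq k$; i.e., all entries of the first column of $M$, except possibly the $k$-th, are equal. -/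
/-- Over an infinite integral domain, if an invertible matrix `M = (f i j)` (with `n ≥ 3`)
induces a map of `Rⁿ` preserving the set `Δ'` of tuples whose coordinates are all equal
except possibly one, then all entries of the first column of `M`, except possibly one,
are equal. -/
theorem first_column_of_preserves_Delta' (R : Type*) [CommRing R] [IsDomain R] [Infinite R]
    (n : ℕ) (hn : 3 ≤ n) (M : Matrix (Fin n) (Fin n) R) (hM : IsUnit M)
    (hΔ : ∀ x : Fin n → R,
      (∃ i : Fin n, ∀ j j' : Fin n, j ≠ i → j' ≠ i → x j = x j') →
      (∃ i : Fin n, ∀ j j' : Fin n, j ≠ i → j' ≠ i → M.mulVec x j = M.mulVec x j')) :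
    ∃ k : Fin n, ∀ i j : Fin n, i ≠ k → j ≠ k →
      M i ⟨0, by omega⟩ = M j ⟨0, by omega⟩ := by
  have h0 : (0 : ℕ) < n := by omega
  set z : Fin n := ⟨0, h0⟩
  -- the standard basis vector at index 0 is in Δ'
  obtain ⟨k, hk⟩ := hΔ (Pi.single z 1)
    ⟨z, fun j j' hj hj' => by simp [Pi.single_apply, hj, hj']⟩
  refine ⟨k, fun i j hi hj => ?_⟩
  have := hk i j hi hj
  simpa [Matrix.mulVec_single] using this
end

section
/- Let $M$ be a type, $n \geq 2$, and let $F : M^n \to M^n$ be a bijection such that both $F$ and $F^{-1}$ satisfy the symmetric condition (for every $x \in M^n$ and $\tau \in \mathfrak{S}_n$ there exists $\tau'$ with $F(\tau \cdot x) = \tau' \cdot F(x)$, and likewise for $F^{-1}$). Then $F$ preserves the big diagonal: $F(\Delta) = \Delta$, where $\Delta := \{(x_1, \ldots, x_n) \in M^n \mid \exists i \neq j,\ x_i = x_j\}$. -/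
open Classical in
/-- Being on the big diagonal is equivalent to non-injectivity of the orbit map. -/
lemma mem_bigDiag_iff {M : Type*} {n : ℕ} (x : Fin n → M) :
    (∃ i j : Fin n, i ≠ j ∧ x i = x j) ↔
      ¬ Function.Injective (fun τ : Equiv.Perm (Fin n) => x ∘ τ) := by
  constructor
  · rintro ⟨i, j, hij, hx⟩ hinj
    have h : x ∘ (Equiv.swap i j) = x ∘ (1 : Equiv.Perm (Fin n)) := by
      funext k
      simp only [Function.comp_apply, Equiv.Perm.coe_one, id_eq]
      rcases eq_or_ne k i with rfl | hki
      · simpa [Equiv.swap_apply_left] using hx.symm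
      rcases eq_or_ne k j with rfl | hkj
      · simpa [Equiv.swap_apply_right] using hx
      · simp [Equiv.swap_apply_of_ne_of_ne hki hkj]
    exact hij (Equiv.swap_eq_one_iff.mp (hinj h))
  · intro hninj
    rw [Function.not_injective_iff] at hninj
    obtain ⟨τ₁, τ₂, hx, hτ⟩ := hninj
    have : ∃ i, τ₁ i ≠ τ₂ i := by
      by_contra h
      push_neg at h
      exact hτ (Equiv.ext h)
    obtain ⟨i, hi⟩ := this
    exact ⟨τ₁ i, τ₂ i, hi, congrFun hx i⟩

open Classical in
lemma orbit_card_le {M : Type*} {n : ℕ} (G : (Fin n → M) ≃ (Fin n → M))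
    (hG : SymmCond (G : (Fin n → M) → (Fin n → M))) (x : Fin n → M) :
    (Finset.univ.image fun τ : Equiv.Perm (Fin n) => x ∘ τ).card ≤
      (Finset.univ.image fun τ : Equiv.Perm (Fin n) => G x ∘ τ).card := by
  have hsub : (Finset.univ.image fun τ : Equiv.Perm (Fin n) => x ∘ τ).image G ⊆
      Finset.univ.image fun τ : Equiv.Perm (Fin n) => G x ∘ τ := by
    intro y hy
    simp only [Finset.mem_image, Finset.mem_univ, true_and] at hy ⊢
    obtain ⟨z, ⟨τ, rfl⟩, rfl⟩ := hy
    obtain ⟨τ', hτ'⟩ := hG x τ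
    exact ⟨τ', hτ'.symm⟩
  calc (Finset.univ.image fun τ : Equiv.Perm (Fin n) => x ∘ τ).card
      = ((Finset.univ.image fun τ : Equiv.Perm (Fin n) => x ∘ τ).image G).card :=
        (Finset.card_image_of_injective _ G.injective).symm
    _ ≤ _ := Finset.card_le_card hsub

/-- If a bijection `F` of `Mⁿ` is such that both `F` and its inverse satisfy the symmetric
condition, then `F` maps the big diagonal (the set of tuples with two equal coordinates)
onto itself. -/
theorem bijective_symmCond_preserves_bigDiagonal (M : Type*) (n : ℕ) (hn : 2 ≤ n)
    (F : (Fin n → M) ≃ (Fin n → M)) (h1 : SymmCond (F : (Fin n → M) → (Fin n → M)))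
    (h2 : SymmCond (F.symm : (Fin n → M) → (Fin n → M))) :
    (F : (Fin n → M) → (Fin n → M)) '' {x | ∃ i j : Fin n, i ≠ j ∧ x i = x j} =
      {x | ∃ i j : Fin n, i ≠ j ∧ x i = x j} := by
  classical
  have hcard : ∀ x : Fin n → M,
      (Finset.univ.image fun τ : Equiv.Perm (Fin n) => x ∘ τ).card =
        (Finset.univ.image fun τ : Equiv.Perm (Fin n) => F x ∘ τ).card := by
    intro x
    refine le_antisymm (orbit_card_le F h1 x) ?_
    have := orbit_card_le F.symm h2 (F x)
    simpa using this
  have hinj_iff : ∀ x : Fin n → M,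
      Function.Injective (fun τ : Equiv.Perm (Fin n) => x ∘ τ) ↔
        (Finset.univ.image fun τ : Equiv.Perm (Fin n) => x ∘ τ).card =
          Fintype.card (Equiv.Perm (Fin n)) := by
    intro x
    constructor
    · intro h
      rw [Finset.card_image_of_injective _ h, Finset.card_univ]
    · intro h
      have : Set.InjOn (fun τ : Equiv.Perm (Fin n) => x ∘ τ)
          ↑(Finset.univ : Finset (Equiv.Perm (Fin n))) :=
        Finset.card_image_iff.mp (by rw [h, Finset.card_univ])
      intro a b hab
      exact this (Finset.mem_coe.mpr (Finset.mem_univ a))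
        (Finset.mem_coe.mpr (Finset.mem_univ b)) hab
  have key : ∀ x : Fin n → M,
      (∃ i j : Fin n, i ≠ j ∧ x i = x j) ↔ (∃ i j : Fin n, i ≠ j ∧ F x i = F x j) := by
    intro x
    rw [mem_bigDiag_iff, mem_bigDiag_iff, hinj_iff, hinj_iff, hcard x]
  ext y
  constructor
  · rintro ⟨x, hx, rfl⟩
    exact (key x).mp hx
  · intro hy
    refine ⟨F.symm y, ?_, F.apply_symm_apply y⟩
    have := (key (F.symm y)).mpr
    rw [F.apply_symm_apply] at this
    exact this hy
end

section
/- Let $K$ be a totally real number field with $[K : \mathbb{Q}] \geq 2$ and let $n \geq 2$ be an integer. Then there exist elements $f, g \in \mathcal{O}_K$ with $g \neq 0$ such that both $f - g$ and $f + (n-1)g$ are units of $\mathcal{O}_K$. -/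
/-!
Since `K` is totally real of degree at least `2`, Dirichlet's unit theorem gives a unit `u` of
infinite order. Its image in the finite ring `𝓞 K ⧸ (n)` has finite order `k`, so
`u ^ k = 1 + n * c` with `u ^ k ≠ 1`, hence `c ≠ 0`. Then `f = c + 1`, `g = c` work:
`f - g = 1` and `f + (n - 1) * g = 1 + n * c = u ^ k`.
-/

open NumberField

theorem exists_isUnit_sub_isUnit_add_mul {R : Type*} [CommRing R] {n : ℕ} (hn : 1 ≤ n)
    {v : R} (hv : IsUnit v) (hv1 : v ≠ 1) (hdvd : (n : R) ∣ v - 1) :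
    ∃ f g : R, g ≠ 0 ∧ IsUnit (f - g) ∧ IsUnit (f + ((n - 1 : ℕ) : R) * g) := by
  obtain ⟨c, hc⟩ := hdvd
  refine ⟨c + 1, c, ?_, by simp, ?_⟩
  · rintro rfl
    exact hv1 (sub_eq_zero.mp (by simpa using hc))
  · convert hv using 1
    push_cast [Nat.cast_sub hn]
    linear_combination -hc

theorem Ideal.exists_pow_sub_one_mem_of_finite_quotient {R : Type*} [CommRing R] (I : Ideal R)
    [Finite (R ⧸ I)] (u : Rˣ) : ∃ k, 0 < k ∧ (u : R) ^ k - 1 ∈ I := by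
  let v := Units.map (Ideal.Quotient.mk I : R →* R ⧸ I) u
  refine ⟨orderOf v, (isOfFinOrder_of_finite v).orderOf_pos, Ideal.Quotient.eq.mp ?_⟩
  rw [map_pow, map_one]
  exact congrArg Units.val (pow_orderOf_eq_one v)

namespace NumberField

variable {K : Type*} [Field K]

theorem isTotallyReal_of_forall_isReal (h : ∀ φ : K →+* ℂ, ComplexEmbedding.IsReal φ) :
    IsTotallyReal K where
  isReal v := by
    rw [← v.mk_embedding]
    exact InfinitePlace.isReal_mk_iff.mpr (h _)

variable [NumberField K]

theorem Units.rank_pos_of_isTotallyReal [IsTotallyReal K] (hd : 2 ≤ Module.finrank ℚ K) :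
    0 < Units.rank K := by
  rw [Units.rank, InfinitePlace.card_eq_nrRealPlaces_add_nrComplexPlaces,
    IsTotallyReal.nrComplexPlaces_eq_zero, ← IsTotallyReal.finrank]
  omega

theorem Units.exists_not_isOfFinOrder (h : 0 < Units.rank K) :
    ∃ u : (𝓞 K)ˣ, ¬IsOfFinOrder u := by
  by_contra! hfin
  have htors : Module.IsTorsion ℤ (Additive (𝓞 K)ˣ) := fun {x} => by
    obtain ⟨m, hm, hx⟩ := isOfFinOrder_iff_pow_eq_one.mp (hfin x.toMul)
    refine ⟨⟨m, mem_nonZeroDivisors_of_ne_zero (by omega)⟩, ?_⟩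
    change (m : ℤ) • x = 0
    rw [natCast_zsmul]
    exact congrArg Additive.ofMul hx
  have hrank := htors.finrank_eq_zero
  rw [Units.finrank_eq] at hrank
  omega

end NumberField

/-- In the ring of integers of a totally real number field of degree at least `2`, for any
`n ≥ 2` there exist `f, g` with `g ≠ 0` such that `f - g` and `f + (n - 1) g` are units. -/
theorem exists_f_g_units_of_totallyReal (K : Type*) [Field K] [NumberField K]
    (htr : ∀ φ : K →+* ℂ, NumberField.ComplexEmbedding.IsReal φ)
    (hd : 2 ≤ Module.finrank ℚ K) (n : ℕ) (hn : 2 ≤ n) :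
    ∃ f g : 𝓞 K, g ≠ 0 ∧ IsUnit (f - g) ∧ IsUnit (f + ((n - 1 : ℕ) : 𝓞 K) * g) := by
  have := isTotallyReal_of_forall_isReal htr
  obtain ⟨u, hu⟩ := Units.exists_not_isOfFinOrder (Units.rank_pos_of_isTotallyReal hd)
  have hn0 : (n : 𝓞 K) ≠ 0 := Nat.cast_ne_zero.mpr (by omega)
  have : Finite (𝓞 K ⧸ Ideal.span {(n : 𝓞 K)}) :=
    Ideal.finiteQuotientOfFreeOfNeBot _ (by simpa [Ideal.span_singleton_eq_bot] using hn0)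
  obtain ⟨k, hk, hmem⟩ := (Ideal.span {(n : 𝓞 K)}).exists_pow_sub_one_mem_of_finite_quotient u
  have huk : (u : 𝓞 K) ^ k ≠ 1 := fun h =>
    hu (isOfFinOrder_iff_pow_eq_one.mpr ⟨k, hk, Units.ext (by simpa using h)⟩)
  exact exists_isUnit_sub_isUnit_add_mul (by omega) (u.isUnit.pow k) huk
    (Ideal.mem_span_singleton.mp hmem)
end

section
/- For all integers $d \geq 2$ and $n \geq 2$, there exist a totally real number field $K$ with $[K : \mathbb{Q}] = d$ and elements $f, g \in \mathcal{O}_K$ with $g \neq 0$ such that the $n \times n$ matrix $f I_n + g(J_n - I_n)$, with diagonal entries $f$ and all off-diagonal entries $g$, is invertible over $\mathcal{O}_K$, i.e., lies in $\mathrm{GL}_n(\mathcal{O}_K)$. -/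
open NumberField

/-!
Let `b₀ = 1`, `b₁ = 1 - n`, `b_k = 1 - n - 4(k - 1)` and `P = ∏_{k<d} (X - b_k) - 1 ∈ ℤ[X]`.
`P` is irreducible: if `P = GH` with `G, H` monic, then `G(b_k) H(b_k) = -1` forces
`G(b_k) = -H(b_k)` at all `d` nodes, so `G = -H` by degree, which contradicts monicity.
`P` takes the value `-1` at the nodes and a value `≥ 2^d - 1` at integer points lying at distance
`≥ 2` from every node with an even number of nodes above them; alternating between such points `P`
changes sign `d` times, so all its roots are real and `K = ℚ(α)` for a root `α` is totally real
of degree `d`. Since `∏ (α - b_k) = 1`, both `α - 1` and `α + n - 1` are units of `𝓞 K`; these are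
`f - g` and `f + (n - 1) g` for `f = α`, `g = 1`, and then `f I + g (J - I) = (f - g) I + g J`
has the inverse `a I + b J` with `a = (f - g)⁻¹`, `b = -g a (f + (n - 1) g)⁻¹`, using `J² = n J`.
-/

open Polynomial Finset IntermediateField

section DiagOffMatrix

variable {R : Type*} [CommRing R] {n : ℕ}

lemma diagOffMatrix_eq_smul_one_add_smul_ones (f g : R) :
    diagOffMatrix R n f g =
      (f - g) • (1 : Matrix (Fin n) (Fin n) R) + g • Matrix.of fun _ _ => 1 := by
  ext i j
  by_cases h : i = j <;> simp [diagOffMatrix, h]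

theorem Matrix.ones_mul_ones :
    (Matrix.of fun _ _ => 1 : Matrix (Fin n) (Fin n) R) * Matrix.of (fun _ _ => 1) =
      (n : R) • Matrix.of fun _ _ => 1 := by
  ext i j
  simp [Matrix.mul_apply]

theorem isUnit_diagOffMatrix {f g : R} (h₁ : IsUnit (f - g)) (h₂ : IsUnit (f + (n - 1) * g)) :
    IsUnit (diagOffMatrix R n f g) := by
  obtain ⟨a, ha⟩ := h₁.exists_right_inv
  obtain ⟨c, hc⟩ := h₂.exists_right_inv
  have hb : (f - g) * (-g * a * c) + g * a + n * g * (-g * a * c) = 0 := by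
    linear_combination (-g * a) * hc
  refine (Matrix.isUnit_iff_isUnit_det _).mpr (Matrix.isUnit_det_of_right_inverse
    (B := a • 1 + (-g * a * c) • Matrix.of fun _ _ => 1) ?_)
  rw [diagOffMatrix_eq_smul_one_add_smul_ones]
  simp only [add_mul, mul_add, smul_mul_smul, Matrix.one_mul, Matrix.mul_one,
    Matrix.ones_mul_ones, smul_smul]
  linear_combination (norm := module)
    ha • (1 : Matrix (Fin n) (Fin n) R) + hb • Matrix.of fun _ _ => 1

end DiagOffMatrix

section ProdXSubCSubOne

variable {ι : Type*} {s : Finset ι}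

lemma monic_prod_X_sub_C_sub_one {R : Type*} [CommRing R] [Nontrivial R] (b : ι → R)
    (hs : s.Nonempty) : (∏ i ∈ s, (X - C (b i)) - 1).Monic := by
  refine (monic_prod_of_monic _ _ fun i _ => monic_X_sub_C (b i)).sub_of_left ?_
  rw [degree_one, ← natDegree_pos_iff_degree_pos,
    natDegree_prod_of_monic _ _ fun i _ => monic_X_sub_C (b i)]
  simpa using hs.card_pos

lemma natDegree_prod_X_sub_C_sub_one {R : Type*} [CommRing R] [Nontrivial R] (b : ι → R) :
    (∏ i ∈ s, (X - C (b i)) - 1).natDegree = #s := by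
  rw [← C_1, natDegree_sub_C, natDegree_prod_of_monic _ _ fun i _ => monic_X_sub_C (b i)]
  simp

theorem irreducible_prod_X_sub_C_sub_one {b : ι → ℤ} (hb : Set.InjOn b s) (hs : s.Nonempty) :
    Irreducible (∏ i ∈ s, (X - C (b i)) - 1) := by
  refine ((monic_prod_X_sub_C_sub_one b hs).irreducible_iff_natDegree).mpr ⟨?_, ?_⟩
  · intro h
    have := congrArg natDegree h
    rw [natDegree_prod_X_sub_C_sub_one, natDegree_one] at this
    exact hs.card_ne_zero this
  intro G H hG hH hGH
  by_contra! hdeg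
  have hsum : G.natDegree + H.natDegree = #s := by
    rw [← hG.natDegree_mul hH, hGH, natDegree_prod_X_sub_C_sub_one]
  have hneg : G = -H := by
    refine eq_of_natDegree_lt_card_of_eval_eq' G (-H) (s.image b) ?_ ?_
    · simp only [mem_image, forall_exists_index, and_imp, forall_apply_eq_imp_iff₂]
      intro i hi
      have hprod : G.eval (b i) * H.eval (b i) = -1 := by
        rw [← eval_mul, hGH, eval_sub, eval_prod, prod_eq_zero hi (by simp)]
        simp
      rw [eval_neg]
      rcases Int.mul_eq_neg_one_iff_eq_one_or_neg_one.mp hprod with h | h <;> omega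
    · rw [natDegree_neg, card_image_of_injOn hb]
      omega
  have := hH.leadingCoeff
  rw [← neg_neg H, ← hneg, leadingCoeff_neg, hG.leadingCoeff] at this
  omega

lemma isUnit_sub_of_aeval_prod_X_sub_C_sub_one {S : Type*} [CommRing S] {b : ι → ℤ} {x : S}
    (hx : aeval x (∏ i ∈ s, (X - C (b i)) - 1) = 0) {i : ι} (hi : i ∈ s) : IsUnit (x - b i) := by
  have hprod : ∏ j ∈ s, (x - b j) = 1 := by
    simpa [sub_eq_zero] using hx
  exact isUnit_of_dvd_one (hprod ▸ dvd_prod_of_mem _ hi)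

end ProdXSubCSubOne

theorem exists_isRoot_Ioo_of_mul_neg {p : ℝ[X]} {a b : ℝ} (hab : a ≤ b)
    (h : p.eval a * p.eval b < 0) : ∃ x ∈ Set.Ioo a b, p.IsRoot x := by
  have hcont : ContinuousOn (fun x => p.eval x) (Set.Icc a b) := p.continuousOn
  rcases mul_neg_iff.mp h with ⟨ha, hb⟩ | ⟨ha, hb⟩
  · exact intermediate_value_Ioo' hab hcont ⟨hb, ha⟩
  · exact intermediate_value_Ioo hab hcont ⟨ha, hb⟩

theorem splits_of_sign_alternating {p : ℝ[X]} {d : ℕ} (hdeg : p.natDegree ≤ d) {t : ℕ → ℝ}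
    (ht : StrictAnti t) (hsign : ∀ m ≤ d, 0 < (-1) ^ m * p.eval (t m)) : p.Splits := by
  have hroot : ∀ m : Fin d, ∃ x ∈ Set.Ioo (t (m + 1)) (t m), p.IsRoot x := by
    intro m
    refine exists_isRoot_Ioo_of_mul_neg (ht (Nat.lt_succ_self m)).le ?_
    have h₁ := hsign (m + 1) m.isLt
    have h₂ := hsign m m.isLt.le
    rcases neg_one_pow_eq_or ℝ m with h | h <;> rw [pow_succ, h] at h₁ <;> rw [h] at h₂ <;>
      nlinarith
  choose x hx hxroot using hroot
  have hx_anti : StrictAnti x := fun m m' hmm' =>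
    calc x m' < t m' := (hx m').2
      _ ≤ t (m + 1) := ht.antitone (Nat.succ_le_of_lt hmm')
      _ < x m := (hx m).1
  have hp : p ≠ 0 := by
    rintro rfl
    simpa using hsign 0 (Nat.zero_le d)
  refine splits_iff_card_roots.mpr (le_antisymm (card_roots' p) ?_)
  calc p.natDegree ≤ d := hdeg
    _ = #(univ.image x) := by rw [card_image_of_injective _ hx_anti.injective, card_fin]
    _ ≤ #p.roots.toFinset := card_le_card fun y hy => by
          obtain ⟨m, -, rfl⟩ := mem_image.mp hy
          exact Multiset.mem_toFinset.mpr ((mem_roots hp).mpr (hxroot m))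
    _ ≤ Multiset.card p.roots := Multiset.toFinset_card_le _

theorem two_pow_le_prod_sub {R : Type*} [CommRing R] [LinearOrder R] [IsStrictOrderedRing R]
    {b : ℕ → R} {x : R} {m d : ℕ} (hmd : m ≤ d) (hm : Even m) (habove : ∀ k < m, x + 2 ≤ b k)
    (hbelow : ∀ k, m ≤ k → k < d → b k + 2 ≤ x) : 2 ^ d ≤ ∏ k ∈ range d, (x - b k) := by
  have two_pow_le {s : Finset ℕ} {f : ℕ → R} (h : ∀ k ∈ s, 2 ≤ f k) : 2 ^ #s ≤ ∏ k ∈ s, f k := by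
    simpa using prod_le_prod (fun _ _ => zero_le_two) h
  have hleft : 2 ^ m ≤ ∏ k ∈ range m, (x - b k) := by
    calc 2 ^ m ≤ ∏ k ∈ range m, (b k - x) := by
          simpa using two_pow_le fun k hk => le_sub_iff_add_le'.mpr (habove k (mem_range.mp hk))
      _ = ∏ k ∈ range m, -(x - b k) := by simp_rw [neg_sub]
      _ = ∏ k ∈ range m, (x - b k) := by rw [prod_neg, card_range, hm.neg_one_pow, one_mul]
  have hright : 2 ^ (d - m) ≤ ∏ k ∈ Ico m d, (x - b k) := by
    simpa using two_pow_le fun k hk =>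
      le_sub_iff_add_le'.mpr ((hbelow k (mem_Ico.mp hk).1 (mem_Ico.mp hk).2))
  rw [← prod_range_mul_prod_Ico _ hmd, ← Nat.add_sub_cancel' hmd, pow_add, Nat.add_sub_cancel' hmd]
  exact mul_le_mul hleft hright (by positivity) ((by positivity : (0 : R) ≤ 2 ^ m).trans hleft)

def node (n : ℕ) : ℕ → ℤ
  | 0 => 1
  | k + 1 => 1 - n - 4 * k

-- Alternately a node, where `nodePoly` is `-1`, and a point at distance `≥ 2` from every node
-- with an even number of nodes above it, where `nodePoly` is `≥ 2 ^ d - 1`.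
def testPoint (n : ℕ) : ℕ → ℤ
  | 0 => 3
  | m + 1 => if Even m then node n m else node n m - 2

noncomputable def nodePoly (n d : ℕ) : ℤ[X] := ∏ k ∈ range d, (X - C (node n k)) - 1

section Nodes

variable {n : ℕ}

lemma node_le_one (k : ℕ) : node n k ≤ 1 := by
  cases k <;> simp only [node] <;> omega

lemma node_add_four_le {j k : ℕ} (hj : j ≠ 0) (hjk : j < k) : node n k + 4 ≤ node n j := by
  obtain ⟨j, rfl⟩ := Nat.exists_eq_succ_of_ne_zero hj
  obtain ⟨k, rfl⟩ := Nat.exists_eq_succ_of_ne_zero (by omega : k ≠ 0)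
  simp only [node]
  omega

lemma node_strictAnti (hn : n ≠ 0) : StrictAnti (node n) :=
  strictAnti_nat_of_succ_lt fun k => by cases k <;> simp only [node] <;> omega

lemma testPoint_strictAnti (hn : n ≠ 0) : StrictAnti (testPoint n) := by
  refine strictAnti_nat_of_succ_lt fun m => ?_
  rcases m with _ | m
  · simp [testPoint, node]
  · rcases Nat.even_or_odd m with hm | hm
    · have := node_strictAnti hn (Nat.lt_add_one m)
      simp [testPoint, hm, Nat.even_add_one]
      omega
    · have := node_add_four_le (n := n) (by rintro rfl; simp at hm) (Nat.lt_add_one m)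
      simp [testPoint, Nat.not_even_iff_odd.mpr hm, hm]
      omega

lemma eval_nodePoly (d : ℕ) (x : ℤ) :
    (nodePoly n d).eval x = ∏ k ∈ range d, (x - node n k) - 1 := by
  simp [nodePoly, eval_prod]

lemma neg_one_pow_mul_eval_nodePoly_testPoint_pos (hn : n ≠ 0) {d m : ℕ} (hd : d ≠ 0)
    (hmd : m ≤ d) : 0 < (-1) ^ m * (nodePoly n d).eval (testPoint n m) := by
  have hnode := node_strictAnti hn
  have h2d : (1 : ℤ) < 2 ^ d := one_lt_pow₀ one_lt_two hd
  rcases m with _ | m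
  · have := two_pow_le_prod_sub (b := node n) (x := 3) (Nat.zero_le d) Even.zero (by simp)
      fun k _ _ => by linarith [node_le_one (n := n) k]
    simp only [pow_zero, one_mul, eval_nodePoly, testPoint]
    linarith
  rcases Nat.even_or_odd m with hm | hm
  · have hzero : ∏ k ∈ range d, (node n m - node n k) = 0 :=
      prod_eq_zero (mem_range.mpr hmd) (sub_self _)
    simp [testPoint, hm, eval_nodePoly, hzero, pow_succ, hm.neg_one_pow]
  · have := two_pow_le_prod_sub (b := node n) (x := node n m - 2) hmd
      (Nat.even_add_one.mpr (Nat.not_even_iff_odd.mpr hm))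
      (fun k hk => by linarith [hnode.antitone (Nat.le_of_lt_succ hk)])
      fun k hk hkd => by linarith [node_add_four_le (n := n) (by rintro rfl; simp at hm) hk]
    simp only [testPoint, Nat.not_even_iff_odd.mpr hm, if_false, eval_nodePoly,
      (Nat.even_add_one.mpr (Nat.not_even_iff_odd.mpr hm)).neg_one_pow, one_mul]
    linarith

end Nodes

section NodePoly

variable {n d : ℕ}

lemma monic_nodePoly (hd : d ≠ 0) : (nodePoly n d).Monic :=
  monic_prod_X_sub_C_sub_one _ (nonempty_range_iff.mpr hd)

lemma natDegree_nodePoly : (nodePoly n d).natDegree = d := by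
  rw [nodePoly, natDegree_prod_X_sub_C_sub_one, card_range]

lemma irreducible_nodePoly (hn : n ≠ 0) (hd : d ≠ 0) : Irreducible (nodePoly n d) :=
  irreducible_prod_X_sub_C_sub_one (node_strictAnti hn).injective.injOn (nonempty_range_iff.mpr hd)

lemma splits_map_nodePoly (hn : n ≠ 0) (hd : d ≠ 0) :
    ((nodePoly n d).map (algebraMap ℤ ℝ)).Splits := by
  refine splits_of_sign_alternating (natDegree_map_le.trans natDegree_nodePoly.le)
    (Int.cast_strictMono.comp_strictAnti (testPoint_strictAnti hn)) fun m hm => ?_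
  rw [Function.comp_apply, eval_intCast_map, algebraMap_int_eq, eq_intCast]
  exact_mod_cast neg_one_pow_mul_eval_nodePoly_testPoint_pos hn hd hm

lemma exists_aeval_nodePoly_eq_zero (hd : d ≠ 0) : ∃ α : ℂ, aeval α (nodePoly n d) = 0 := by
  obtain ⟨α, hα⟩ := Complex.exists_root (f := (nodePoly n d).map (algebraMap ℤ ℂ))
    (natDegree_pos_iff_degree_pos.mp
      (by rw [(monic_nodePoly hd).natDegree_map, natDegree_nodePoly]; omega))
  exact ⟨α, by rwa [aeval_def, eval₂_eq_eval_map]⟩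

lemma minpoly_eq_map_nodePoly (hn : n ≠ 0) (hd : d ≠ 0) {α : ℂ}
    (hα : aeval α (nodePoly n d) = 0) : minpoly ℚ α = (nodePoly n d).map (algebraMap ℤ ℚ) :=
  (minpoly.eq_of_irreducible_of_monic
    ((monic_nodePoly hd).irreducible_iff_irreducible_map_fraction_map.mp
      (irreducible_nodePoly hn hd))
    (by rwa [aeval_map_algebraMap]) ((monic_nodePoly hd).map _)).symm

end NodePoly

theorem NumberField.ComplexEmbedding.isReal_of_splits_minpoly {α : ℂ} (hα : IsIntegral ℚ α)
    (hsplit : ((minpoly ℚ α).map (algebraMap ℚ ℝ)).Splits) (φ : ℚ⟮α⟯ →+* ℂ) : IsReal φ := by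
  have hgen : aeval (AdjoinSimple.gen ℚ α) (minpoly ℚ α) = 0 := by
    rw [← aeval_algebraMap_eq_zero_iff ℂ, AdjoinSimple.algebraMap_gen, minpoly.aeval]
  have hroot : (((minpoly ℚ α).map (algebraMap ℚ ℝ)).map (algebraMap ℝ ℂ)).IsRoot
      (φ (AdjoinSimple.gen ℚ α)) := by
    rw [Polynomial.map_map, ← IsScalarTower.algebraMap_eq, IsRoot, eval_map_algebraMap]
    exact (aeval_algHom_apply φ.toRatAlgHom _ _).trans (by rw [hgen, map_zero])
  obtain ⟨r, hr⟩ := hsplit.mem_range_of_isRoot (map_ne_zero (minpoly.ne_zero hα)) hroot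
  have : (conjugate φ).toRatAlgHom = φ.toRatAlgHom :=
    adjoin_algHom_ext ℚ fun x hx => by
      obtain rfl : α = x := hx.symm
      change starRingEnd ℂ (φ (AdjoinSimple.gen ℚ α)) = φ (AdjoinSimple.gen ℚ α)
      rw [← hr]
      exact Complex.conj_ofReal r
  rw [isReal_iff]
  exact RingHom.ext (AlgHom.congr_fun this)

lemma exists_aeval_ringOfIntegers_eq_zero {E : Type*} [Field E] [Algebra ℚ E] {P : ℤ[X]}
    (hP : P.Monic) {α : E} (hα : aeval α P = 0) : ∃ A : 𝓞 ℚ⟮α⟯, aeval A P = 0 := by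
  have hgen : aeval (AdjoinSimple.gen ℚ α) P = 0 := by
    rwa [← aeval_algebraMap_eq_zero_iff_of_injective (algebraMap ℚ⟮α⟯ E).injective,
      AdjoinSimple.algebraMap_gen]
  exact ⟨⟨_, P, hP, hgen⟩,
    (aeval_algebraMap_eq_zero_iff_of_injective RingOfIntegers.coe_injective).mp hgen⟩

/-- For all `d ≥ 2` and `n ≥ 2` there exist a totally real number field `K` of degree `d`
and `f, g` in its ring of integers with `g ≠ 0` such that the `n × n` matrix with diagonal
entries `f` and off-diagonal entries `g` is invertible over `𝓞 K`. -/
theorem exists_totallyReal_and_invertible_diagOffMatrix (d n : ℕ) (hd : 2 ≤ d) (hn : 2 ≤ n) :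
    ∃ K : IntermediateField ℚ ℂ, NumberField K ∧
      (∀ φ : K →+* ℂ, NumberField.ComplexEmbedding.IsReal φ) ∧
      Module.finrank ℚ K = d ∧
      ∃ f g : 𝓞 K, g ≠ 0 ∧ IsUnit (diagOffMatrix (𝓞 K) n f g) := by
  have hn₀ : n ≠ 0 := by omega
  have hd₀ : d ≠ 0 := by omega
  have hP := monic_nodePoly (n := n) hd₀
  obtain ⟨α, hα⟩ := exists_aeval_nodePoly_eq_zero (n := n) hd₀
  have hmin := minpoly_eq_map_nodePoly hn₀ hd₀ hα
  have hint : IsIntegral ℚ α := minpoly.ne_zero_iff.mp (hmin ▸ (hP.map _).ne_zero)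
  have := adjoin.finiteDimensional hint
  refine ⟨ℚ⟮α⟯, ⟨⟩, ComplexEmbedding.isReal_of_splits_minpoly hint ?_, ?_, ?_⟩
  · rw [hmin, Polynomial.map_map, ← IsScalarTower.algebraMap_eq]
    exact splits_map_nodePoly hn₀ hd₀
  · rw [adjoin.finrank hint, hmin, hP.natDegree_map, natDegree_nodePoly]
  obtain ⟨A, hA⟩ := exists_aeval_ringOfIntegers_eq_zero hP hα
  have hunit {k : ℕ} (hk : k < d) : IsUnit (A - node n k) :=
    isUnit_sub_of_aeval_prod_X_sub_C_sub_one hA (mem_range.mpr hk)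
  refine ⟨A, 1, one_ne_zero, isUnit_diagOffMatrix ?_ ?_⟩
  · simpa [node] using hunit (k := 0) (by omega)
  · convert hunit (k := 1) hd using 1
    simp [node]
    ring
end

section
/- Let $R$ be an infinite integral domain and let $M = (f_{ij}) \in \mathrm{GL}_2(R)$ be an invertible $2 \times 2$ matrix such that the map $F : R^2 \to R^2$, $x \mapsto Mx$, satisfies the symmetric condition: for every $x \in R^2$ and every permutation $\tau \in \mathfrak{S}_2$, there exists $\tau' \in \mathfrak{S}_2$ with $F(\tau \cdot x) = \tau' \cdot F(x)$. Then there exist $f, g \in R$ with $f \neq g$ such that $M = \begin{pmatrix} f & g \\ g & f \end{pmatrix}$ or $M = \begin{pmatrix} g & f \\ f & g \end{pmatrix}$. -/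
/-- Over an infinite integral domain, an invertible `2 × 2` matrix inducing a map of `R²`
that satisfies the symmetric condition is of the form `!![f, g; g, f]` or `!![g, f; f, g]`
with `f ≠ g`. -/
theorem symmCond_classification_two (R : Type*) [CommRing R] [IsDomain R] [Infinite R]
    (M : Matrix (Fin 2) (Fin 2) R) (hM : IsUnit M)
    (hsym : SymmCond fun x => M.mulVec x) :
    ∃ f g : R, f ≠ g ∧ (M = !![f, g; g, f] ∨ M = !![g, f; f, g]) := by
  obtain ⟨τ', hτ'⟩ := hsym ![1, 0] (Equiv.swap 0 1)
  have hdet : IsUnit M.det := (Matrix.isUnit_iff_isUnit_det M).mp hM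
  rw [Matrix.det_fin_two] at hdet
  have hcomp : (![1, 0] : Fin 2 → R) ∘ (Equiv.swap 0 1) = ![0, 1] := by
    funext i; fin_cases i <;> simp
  rw [hcomp] at hτ'
  have h0 := congrFun hτ' 0
  have h1 := congrFun hτ' 1
  simp only [Function.comp_apply] at h0 h1
  have e0 : ∀ i : Fin 2, M.mulVec ![(0:R), 1] i = M i 1 := by
    intro i; simp [Matrix.mulVec, dotProduct, Fin.sum_univ_two]
  have e1 : ∀ i : Fin 2, M.mulVec ![(1:R), 0] i = M i 0 := by
    intro i; simp [Matrix.mulVec, dotProduct, Fin.sum_univ_two]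
  rw [e0, e1] at h0
  rw [e0, e1] at h1
  have hcase : τ' 0 = 0 ∨ τ' 0 = 1 := by omega
  rcases hcase with hc | hc
  · -- τ' = identity: columns of M are equal, contradicting invertibility
    have hc1 : τ' 1 = 1 := by
      have hne : τ' 1 ≠ τ' 0 := fun h => by simpa using τ'.injective h
      rw [hc] at hne; omega
    rw [hc] at h0; rw [hc1] at h1
    exfalso
    have : M 0 0 * M 1 1 - M 0 1 * M 1 0 = 0 := by rw [← h0, ← h1]; ring
    rw [this] at hdet
    exact not_isUnit_zero hdet
  · -- τ' = swap: M 0 1 = M 1 0 and M 1 1 = M 0 0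
    have hc1 : τ' 1 = 0 := by
      have hne : τ' 1 ≠ τ' 0 := fun h => by simpa using τ'.injective h
      rw [hc] at hne; omega
    rw [hc] at h0; rw [hc1] at h1
    refine ⟨M 0 0, M 0 1, ?_, Or.inl ?_⟩
    · intro h
      have : M 0 0 * M 1 1 - M 0 1 * M 1 0 = 0 := by rw [h1, ← h0, h]; ring
      rw [this] at hdet
      exact not_isUnit_zero hdet
    · ext i j
      fin_cases i <;> fin_cases j <;> simp [h0, h1]
end
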